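/- For every integer k ≥ 1, the graph G_k contains K_{k+1} as a minor: there exist k+1 pairwise disjoint nonempty subsets of the vertex set of G_k, each inducing a connected subgraph of G_k, such that for any two of these subsets there is an edge of G_k joining a vertex of one to a vertex of the other. -/

import Mathlib

open SimpleGraph

noncomputable def degN {V : Type} (G : SimpleGraph V) (v : V) : ℕ :=
  Nat.card (G.neighborSet v)

def HasIndepCycles {V : Type} (G : SimpleGraph V) (k : ℕ) : Prop :=
  ∃ (b : Fin k → V) (w : ∀ i, G.Walk (b i) (b i)),
    (∀ i, (w i).IsCycle) ∧
    ∀ i j, i ≠ j →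
      ∀ x ∈ (w i).support, ∀ y ∈ (w j).support, x ≠ y ∧ ¬ G.Adj x y

def OkFree {V : Type} (G : SimpleGraph V) (k : ℕ) : Prop :=
  ¬ HasIndepCycles G k

def ContainsKst {V : Type} (G : SimpleGraph V) (s t : ℕ) : Prop :=
  ∃ A B : Finset V, Disjoint A B ∧ A.card = s ∧ B.card = t ∧
    ∀ a ∈ A, ∀ b ∈ B, G.Adj a b

def IsFVS {V : Type} (G : SimpleGraph V) (X : Set V) : Prop :=
  (G.induce {v | v ∉ X}).IsAcyclic

def GirthAtLeast {V : Type} (G : SimpleGraph V) (ℓ : ℕ) : Prop :=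
  ∀ (v : V) (w : G.Walk v v), w.IsCycle → ℓ ≤ w.length

noncomputable def cycleRank {V : Type} (G : SimpleGraph V) : ℤ :=
  (Nat.card G.edgeSet : ℤ) - (Nat.card V : ℤ) + (Nat.card G.ConnectedComponent : ℤ)

/-- The graph `G_k`: a path `u_1, …, u_{2^k−1}` together with an independent set
`v_0, …, v_{k−1}`, where `v_i` is adjacent to `u_j` iff `i` is the 2-adic valuation
of `j`. The path vertex `u_j` is represented by `Sum.inl ⟨j - 1, _⟩`. -/
def Gk (k : ℕ) : SimpleGraph (Fin (2 ^ k - 1) ⊕ Fin k) :=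
  SimpleGraph.fromRel fun a b =>
    match a, b with
    | Sum.inl i, Sum.inl j => (j : ℕ) = (i : ℕ) + 1
    | Sum.inl j, Sum.inr i => padicValNat 2 ((j : ℕ) + 1) = (i : ℕ)
    | _, _ => False

/-!
The branch sets are `B_t = {v_t} ∪ {u_m : 2^t ≤ m < min(2^(t+1), T)}` for `t < k` and
`B_k = {u_m : T ≤ m}`, where `T = 3 · 2^k / 4` cuts the top dyadic block `[2^(k-1), 2^k)` in
the ratio 1 : 2. Each `B_t` is a path segment, hooked to `v_t` through `u_(2^t)`. For `s < t`,
`v_s` is joined to `B_t` through `u_(2^t + 2^s)` (if `t < k`) or `u_(2^k - 2^s)` (if `t = k`),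
both of 2-order `s`; in the two cases where that vertex falls outside `B_t`, namely
`(s, t) = (k-2, k-1)` and `(k-1, k)`, the sets are consecutive segments of the path.
-/

theorem SimpleGraph.induce_connected_of_descent {V : Type*} {G : SimpleGraph V} {S : Set V}
    {h : V} (hh : h ∈ S) (d : V → ℕ)
    (hd : ∀ x ∈ S, x ≠ h → ∃ y ∈ S, G.Adj x y ∧ d y < d x) :
    (G.induce S).Connected := by
  refine (connected_iff_exists_forall_reachable _).2 ⟨⟨h, hh⟩, ?_⟩
  rintro ⟨x, hx⟩
  induction hn : d x using Nat.strong_induction_on generalizing x with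
  | _ n ih =>
    by_cases hxh : x = h
    · subst hxh; rfl
    obtain ⟨y, hy, hxy, hdy⟩ := hd x hx hxh
    exact (ih _ (hn ▸ hdy) y hy rfl).trans (Adj.reachable hxy.symm)

theorem Nat.two_pow_eq_or_four_mul_le {s t : ℕ} (h : s < t) :
    2 ^ t = 2 * 2 ^ s ∨ 4 * 2 ^ s ≤ 2 ^ t := by
  rcases (by omega : t = s + 1 ∨ s + 2 ≤ t) with rfl | hst
  · exact Or.inl (pow_succ' ..)
  · exact Or.inr (by simpa [pow_add, mul_comm] using Nat.pow_le_pow_right two_pos hst)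

theorem padicValNat_two_pow_mul {c : ℕ} (s : ℕ) (hc : Odd c) :
    padicValNat 2 (2 ^ s * c) = s := by
  rw [padicValNat.mul (by positivity) (by rintro rfl; simp at hc), padicValNat.prime_pow,
    padicValNat.eq_zero_of_not_dvd (by simpa [← even_iff_two_dvd] using hc), add_zero]

theorem padicValNat_two_pow_add_two_pow {s t : ℕ} (h : s < t) :
    padicValNat 2 (2 ^ t + 2 ^ s) = s := by
  obtain ⟨d, rfl⟩ := Nat.exists_eq_add_of_lt h
  rw [show 2 ^ (s + d + 1) + 2 ^ s = 2 ^ s * (2 * 2 ^ d + 1) by ring]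
  exact padicValNat_two_pow_mul s (odd_two_mul_add_one _)

theorem padicValNat_two_pow_sub_two_pow {s t : ℕ} (h : s < t) :
    padicValNat 2 (2 ^ t - 2 ^ s) = s := by
  obtain ⟨d, rfl⟩ := Nat.exists_eq_add_of_lt h
  have : 1 ≤ 2 ^ d := Nat.one_le_two_pow
  rw [show 2 ^ (s + d + 1) = 2 ^ s * (2 * (2 ^ d - 1) + 1) + 2 ^ s by
    zify [this]; ring, Nat.add_sub_cancel]
  exact padicValNat_two_pow_mul s (odd_two_mul_add_one _)

namespace Gk

variable {k : ℕ}

theorem adj_inl_inl {p q : Fin (2 ^ k - 1)} (h : (q : ℕ) = p + 1) :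
    (Gk k).Adj (.inl p) (.inl q) := by
  simp [Gk, h, Fin.ext_iff]

theorem adj_inl_inr {p : Fin (2 ^ k - 1)} {i : Fin k} (h : padicValNat 2 (p + 1) = i) :
    (Gk k).Adj (.inl p) (.inr i) := by
  simp [Gk, h]

/-- The branch set of `u_m`. For `k = 1` the threshold is `1`, so `B_0 = {v_0}` and
`B_1 = {u_1}`. -/
def pathBlock (k m : ℕ) : ℕ := if 3 * 2 ^ k / 4 ≤ m then k else Nat.log 2 m

theorem pathBlock_eq_iff_of_lt {t m : ℕ} (ht : t < k) (hm : m ≠ 0) :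
    pathBlock k m = t ↔ 2 ^ t ≤ m ∧ m < 2 ^ (t + 1) ∧ m < 3 * 2 ^ k / 4 := by
  unfold pathBlock
  split_ifs with h
  · omega
  · simp [Nat.log_eq_iff (Or.inr ⟨one_lt_two, hm⟩), not_le.1 h]

theorem pathBlock_eq_self_iff {m : ℕ} : pathBlock k m = k ↔ 3 * 2 ^ k / 4 ≤ m := by
  unfold pathBlock
  split_ifs with h
  · simp [h]
  · refine iff_of_false (fun hlog => h ?_) h
    rcases eq_or_ne m 0 with rfl | hm
    · simp [← hlog]
    · have := hlog ▸ Nat.pow_log_le_self 2 hm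
      omega

def branchIndex (k : ℕ) : Fin (2 ^ k - 1) ⊕ Fin k → ℕ :=
  Sum.elim (fun p => pathBlock k (p + 1)) (fun i => i)

def branchSet (k t : ℕ) : Finset (Fin (2 ^ k - 1) ⊕ Fin k) :=
  Finset.univ.filter (branchIndex k · = t)

@[simp]
theorem inl_mem_branchSet {p : Fin (2 ^ k - 1)} {t : ℕ} :
    .inl p ∈ branchSet k t ↔ pathBlock k (p + 1) = t := by
  rw [branchSet, Finset.mem_filter]
  simp [branchIndex]

@[simp]
theorem inr_mem_branchSet {i : Fin k} {t : ℕ} : .inr i ∈ branchSet k t ↔ (i : ℕ) = t := by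
  rw [branchSet, Finset.mem_filter]
  simp [branchIndex]

theorem branchSet_nonempty (hk : 1 ≤ k) {t : ℕ} (ht : t ≤ k) : (branchSet k t).Nonempty := by
  have : 2 ≤ 2 ^ k := Nat.le_self_pow (by omega) 2
  rcases ht.lt_or_eq with ht | rfl
  · exact ⟨.inr ⟨t, ht⟩, by simp⟩
  · refine ⟨.inl ⟨2 ^ t - 2, by omega⟩, ?_⟩
    rw [inl_mem_branchSet, pathBlock_eq_self_iff]
    simp only
    omega

theorem connected_branchSet_of_lt {t : ℕ} (ht : t < k) :
    ((Gk k).induce (branchSet k t : Set (Fin (2 ^ k - 1) ⊕ Fin k))).Connected := by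
  refine induce_connected_of_descent (h := .inr ⟨t, ht⟩) (by simp) (Sum.elim (· + 1) 0) ?_
  rintro (p | i) hx hne
  · rw [Finset.mem_coe, inl_mem_branchSet, pathBlock_eq_iff_of_lt ht (by omega)] at hx
    by_cases hp : (p : ℕ) + 1 = 2 ^ t
    · exact ⟨.inr ⟨t, ht⟩, by simp, adj_inl_inr (by rw [hp, padicValNat.prime_pow]),
        by simp⟩
    · refine ⟨.inl ⟨p - 1, by omega⟩, ?_, (adj_inl_inl (by simp only; omega)).symm,
        by simp only [Sum.elim_inl]; omega⟩
      rw [Finset.mem_coe, inl_mem_branchSet, pathBlock_eq_iff_of_lt ht (by omega)]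
      simp only
      omega
  · simp only [Finset.mem_coe, inr_mem_branchSet] at hx
    exact absurd (congrArg Sum.inr (Fin.ext hx)) hne

theorem connected_branchSet_self (hk : 1 ≤ k) :
    ((Gk k).induce (branchSet k k : Set (Fin (2 ^ k - 1) ⊕ Fin k))).Connected := by
  have : 2 ≤ 2 ^ k := Nat.le_self_pow (by omega) 2
  refine induce_connected_of_descent (h := .inl ⟨3 * 2 ^ k / 4 - 1, by omega⟩)
    (by rw [Finset.mem_coe, inl_mem_branchSet, pathBlock_eq_self_iff]; simp only; omega)
    (Sum.elim (· + 1) 0) ?_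
  rintro (p | i) hx hne
  · rw [Finset.mem_coe, inl_mem_branchSet, pathBlock_eq_self_iff] at hx
    have : (p : ℕ) ≠ 3 * 2 ^ k / 4 - 1 := fun h => hne (congrArg Sum.inl (Fin.ext h))
    refine ⟨.inl ⟨p - 1, by omega⟩, ?_, (adj_inl_inl (by simp only; omega)).symm,
      by simp only [Sum.elim_inl]; omega⟩
    rw [Finset.mem_coe, inl_mem_branchSet, pathBlock_eq_self_iff]
    simp only
    omega
  · simp only [Finset.mem_coe, inr_mem_branchSet] at hx
    omega

theorem connected_branchSet (hk : 1 ≤ k) {t : ℕ} (ht : t ≤ k) :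
    ((Gk k).induce (branchSet k t : Set (Fin (2 ^ k - 1) ⊕ Fin k))).Connected := by
  rcases ht.lt_or_eq with ht | rfl
  exacts [connected_branchSet_of_lt ht, connected_branchSet_self hk]

theorem disjoint_branchSet {s t : ℕ} (hst : s ≠ t) : Disjoint (branchSet k s) (branchSet k t) :=
  Finset.disjoint_filter.2 fun _ _ hs ht => hst (hs.symm.trans ht)

theorem exists_adj_of_padicValNat {s t m : ℕ} (hs : s < k) (hm : m ≠ 0) (hmk : m < 2 ^ k)
    (hv : padicValNat 2 m = s) (hb : pathBlock k m = t) :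
    ∃ a ∈ branchSet k s, ∃ b ∈ branchSet k t, (Gk k).Adj a b := by
  have hm' : m - 1 + 1 = m := by omega
  refine ⟨.inr ⟨s, hs⟩, by simp, .inl ⟨m - 1, by omega⟩, ?_, (adj_inl_inr ?_).symm⟩
  · rwa [inl_mem_branchSet, hm']
  · rwa [hm']

theorem exists_adj_of_pathBlock_succ {s t m : ℕ} (hm : m ≠ 0) (hmk : m + 1 < 2 ^ k)
    (hs : pathBlock k m = s) (ht : pathBlock k (m + 1) = t) :
    ∃ a ∈ branchSet k s, ∃ b ∈ branchSet k t, (Gk k).Adj a b := by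
  have hm' : m - 1 + 1 = m := by omega
  refine ⟨.inl ⟨m - 1, by omega⟩, ?_, .inl ⟨m, by omega⟩, inl_mem_branchSet.2 ht,
    adj_inl_inl hm'.symm⟩
  rwa [inl_mem_branchSet, hm']

theorem exists_adj_branchSet_of_lt {s t : ℕ} (hst : s < t) (ht : t < k) :
    ∃ a ∈ branchSet k s, ∃ b ∈ branchSet k t, (Gk k).Adj a b := by
  have := Nat.two_pow_eq_or_four_mul_le hst
  have := Nat.two_pow_eq_or_four_mul_le ht
  have := pow_succ 2 s
  have := pow_succ 2 t
  have : 1 ≤ 2 ^ s := Nat.one_le_two_pow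
  by_cases h : 2 ^ t + 2 ^ s < 3 * 2 ^ k / 4
  · exact exists_adj_of_padicValNat (hst.trans ht) (by positivity) (by omega)
      (padicValNat_two_pow_add_two_pow hst)
      ((pathBlock_eq_iff_of_lt ht (by positivity)).2 (by omega))
  · exact exists_adj_of_pathBlock_succ (m := 2 ^ t - 1) (by omega) (by omega)
      ((pathBlock_eq_iff_of_lt (hst.trans ht) (by omega)).2 (by omega))
      ((pathBlock_eq_iff_of_lt ht (by omega)).2 (by omega))

theorem exists_adj_branchSet_self {s : ℕ} (hs : s < k) :
    ∃ a ∈ branchSet k s, ∃ b ∈ branchSet k k, (Gk k).Adj a b := by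
  have := Nat.two_pow_eq_or_four_mul_le hs
  have := pow_succ 2 s
  have : 1 ≤ 2 ^ s := Nat.one_le_two_pow
  by_cases h : 3 * 2 ^ k / 4 ≤ 2 ^ k - 2 ^ s
  · exact exists_adj_of_padicValNat hs (by omega) (by omega) (padicValNat_two_pow_sub_two_pow hs)
      (pathBlock_eq_self_iff.2 h)
  · exact exists_adj_of_pathBlock_succ (m := 3 * 2 ^ k / 4 - 1) (by omega) (by omega)
      ((pathBlock_eq_iff_of_lt hs (by omega)).2 (by omega)) (pathBlock_eq_self_iff.2 (by omega))

theorem exists_adj_branchSet {s t : ℕ} (hst : s < t) (ht : t ≤ k) :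
    ∃ a ∈ branchSet k s, ∃ b ∈ branchSet k t, (Gk k).Adj a b := by
  rcases ht.lt_or_eq with ht | rfl
  exacts [exists_adj_branchSet_of_lt hst ht, exists_adj_branchSet_self hst]

end Gk

/-- For every `k ≥ 1`, the graph `G_k` contains `K_{k+1}` as a minor:
there are `k+1` pairwise disjoint nonempty vertex subsets, each inducing a connected
subgraph, with an edge of `G_k` between any two of them. -/
theorem stmt2 (k : ℕ) (hk : 1 ≤ k) :
    ∃ A : Fin (k + 1) → Finset (Fin (2 ^ k - 1) ⊕ Fin k),
      (∀ i, (A i).Nonempty) ∧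
      (∀ i j, i ≠ j → Disjoint (A i) (A j)) ∧
      (∀ i, ((Gk k).induce (↑(A i) : Set (Fin (2 ^ k - 1) ⊕ Fin k))).Connected) ∧
      (∀ i j, i ≠ j → ∃ a ∈ A i, ∃ b ∈ A j, (Gk k).Adj a b) := by
  refine ⟨fun i => Gk.branchSet k i, fun i => Gk.branchSet_nonempty hk (Fin.is_le i),
    fun i j hij => Gk.disjoint_branchSet (Fin.val_ne_of_ne hij),
    fun i => Gk.connected_branchSet hk (Fin.is_le i), fun i j hij => ?_⟩
  rcases Fin.lt_or_lt_of_ne hij with h | h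
  · exact Gk.exists_adj_branchSet h (Fin.is_le j)
  · obtain ⟨a, ha, b, hb, hab⟩ := Gk.exists_adj_branchSet h (Fin.is_le i)
    exact ⟨b, hb, a, ha, hab.symm⟩
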